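/- Let (A,B) be a NITA with non-real b_3 ∈ B of degree 3 satisfying b_3·b̄_3 = 1 + c_8 and b_3² = b̄_3 + b_6 where b_6 ∈ B is non-real, b_3·b_6 = c_8 + b_10 with b_10 ∈ B real, with no nontrivial basis elements of degree 1 or 2, and assume (c̄_9·b_3, c_9) = 1 where c_9 is the degree-9 basis element with b_3·b_10 = b_15 + b̄_6 + c̄_9. Then there exists c_3 ∈ B of degree 3 with b_3·c̄_9 = b̄_15 + c_9 + c_3, and the element c_3 satisfies c_3·c̄_3 = 1 + b_8 for some real b_8 ∈ B of degree 8 with b_8 ≠ c_8, as well as b_3·c̄_3 = c_9 and b_3·c_3 = b_9 for a real b_9 ∈ B of degree 9. -/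

import Mathlib

/-- A normalized table algebra datum on a commutative `ℂ`-algebra `A`:
a distinguished basis `B` containing `1`, an involutive algebra
endomorphism `bar` permuting `B`, a bilinear form for which `B` is
orthonormal and which satisfies `(a, bc) = (a·b̄, c)`, nonnegative real
structure constants, and a degree homomorphism positive on `B`. -/
structure TAData (A : Type) [CommRing A] [Algebra ℂ A] : Type where
  B : Finset A
  one_mem : (1 : A) ∈ B
  indep : LinearIndependent ℂ (fun b : {x : A // x ∈ B} => (b : A))
  span_top : Submodule.span ℂ (B : Set A) = ⊤
  bar : A →ₐ[ℂ] A
  bar_bar : ∀ a : A, bar (bar a) = a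
  bar_mem : ∀ b ∈ B, bar b ∈ B
  ip : A →ₗ[ℂ] A →ₗ[ℂ] ℂ
  ip_symm : ∀ a b : A, ip a b = ip b a
  ip_self : ∀ b ∈ B, ip b b = 1
  ip_ne : ∀ b ∈ B, ∀ c ∈ B, b ≠ c → ip b c = 0
  ip_assoc : ∀ a b c : A, ip a (b * c) = ip (a * bar b) c
  struct_nonneg : ∀ b ∈ B, ∀ c ∈ B, ∀ d ∈ B, ∃ r : ℝ, 0 ≤ r ∧ ip (b * c) d = (r : ℂ)
  deg : A →ₐ[ℂ] ℂ
  deg_pos : ∀ b ∈ B, ∃ r : ℝ, 0 < r ∧ deg b = (r : ℂ)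

namespace TAData

variable {A : Type} [CommRing A] [Algebra ℂ A]

/-- Integrality (making a table algebra a NITA): all structure constants are
nonnegative integers and all degrees are positive integers. -/
def Integral (T : TAData A) : Prop :=
  (∀ b ∈ T.B, ∀ c ∈ T.B, ∀ d ∈ T.B, ∃ n : ℕ, T.ip (b * c) d = (n : ℂ)) ∧
  (∀ b ∈ T.B, ∃ n : ℕ, 0 < n ∧ T.deg b = (n : ℂ))

/-- `L₁(B) = {1}` and `L₂(B) = ∅`: no nontrivial basis elements of degree 1 or 2. -/
def NoSmall (T : TAData A) : Prop :=
  (∀ b ∈ T.B, T.deg b = 1 → b = 1) ∧ (∀ b ∈ T.B, T.deg b ≠ 2)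

/-- The table algebra is generated (as an algebra) by `b` (and its conjugate). -/
def GeneratedBy (T : TAData A) (b : A) : Prop :=
  Algebra.adjoin ℂ ({b, T.bar b} : Set A) = ⊤

/-- A table subset of `B`: contains `1`, closed under the involution and under
supports of products. -/
def IsTableSubset (T : TAData A) (C : Set A) : Prop :=
  C ⊆ ↑T.B ∧ (1 : A) ∈ C ∧ (∀ b ∈ C, T.bar b ∈ C) ∧
    ∀ b ∈ C, ∀ c ∈ C, ∀ d ∈ T.B, T.ip (b * c) d ≠ 0 → d ∈ C

end TAData


/-!
Put `c₃ := b₃c̄₉ - b̄₁₅ - c₉`. Its coefficients in `B` are natural numbers (the coefficients of `b̄₁₅`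
and `c₉` in `b₃c̄₉` are `1`), it has degree 3 and no component at `1`; as every basis element other
than `1` has degree at least 3, `c₃ ∈ B`. The remaining claims follow from a few coefficients
computed with `(ab, c) = (b, āc)` together with the same degree and norm counting: `b₃c̄₃ - c₉` has
degree 0, `(b₃c₃, b₃c₃) = 1`, and `(c₃², b̄₆) = 1`, by expanding `c̄₃b̄₆` through `b̄₆ = c₈b₃ - b₃ - b₁₅`,
where the one unknown term `(c₃², b₁₅)` vanishes because `deg c₃² = 9 < 15`. Hence `b₃c₃` is real,
`c₃` is not (else `c₃² - 1 - b̄₆` would have degree 2), `c₃² = b̄₆ + y₃` with `y₃ ∈ B`, and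
`(c₃c̄₃, c₃c̄₃) = (c₃², c₃²) = 2` gives `c₃c̄₃ = 1 + b₈`.
-/

open scoped ComplexOrder

namespace TAData

variable {A : Type} [CommRing A] [Algebra ℂ A] (T : TAData A)

lemma ip_mul_left (a b c : A) : T.ip (a * b) c = T.ip b (T.bar a * c) := by
  rw [T.ip_symm, T.ip_assoc, T.ip_symm, mul_comm]

lemma ip_eq_zero_of_deg_ne {b c : A} (hb : b ∈ T.B) (hc : c ∈ T.B)
    (h : T.deg b ≠ T.deg c) : T.ip b c = 0 :=
  T.ip_ne b hb c hc fun hbc => h (congrArg T.deg hbc)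

lemma ip_sum_smul (f : A → ℂ) {e : A} (he : e ∈ T.B) :
    T.ip (∑ d ∈ T.B, f d • d) e = f e := by
  simp only [map_sum, map_smul, LinearMap.sum_apply, LinearMap.smul_apply, smul_eq_mul]
  rw [Finset.sum_eq_single e (fun d hd hde => by rw [T.ip_ne d hd e he hde, mul_zero])
    (fun h => absurd he h), T.ip_self e he, mul_one]

lemma sum_ip_smul (x : A) : ∑ d ∈ T.B, T.ip x d • d = x := by
  have hx : x ∈ Submodule.span ℂ (T.B : Set A) := T.span_top ▸ Submodule.mem_top
  induction hx using Submodule.span_induction with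
  | mem b hb =>
    rw [Finset.sum_eq_single b
      (fun d hd hdb => by rw [T.ip_ne b hb d hd (Ne.symm hdb), zero_smul])
      (fun h => absurd hb h), T.ip_self b hb, one_smul]
  | zero => simp
  | add x y _ _ hx hy => simp only [map_add, LinearMap.add_apply, add_smul,
      Finset.sum_add_distrib, hx, hy]
  | smul a x _ hx => simp only [map_smul, LinearMap.smul_apply, smul_eq_mul, mul_smul,
      ← Finset.smul_sum, hx]

lemma ext_ip {x y : A} (h : ∀ d ∈ T.B, T.ip x d = T.ip y d) : x = y := by
  rw [← T.sum_ip_smul x, ← T.sum_ip_smul y]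
  exact Finset.sum_congr rfl fun d hd => by rw [h d hd]

lemma exists_ip_ne_zero {x : A} (hx : x ≠ 0) : ∃ d ∈ T.B, T.ip x d ≠ 0 := by
  by_contra! h
  exact hx (T.ext_ip fun d hd => by rw [h d hd, map_zero, LinearMap.zero_apply])

lemma deg_eq_sum (x : A) : T.deg x = ∑ d ∈ T.B, T.ip x d * T.deg d := by
  conv_lhs => rw [← T.sum_ip_smul x]
  simp only [map_sum, map_smul, smul_eq_mul]

lemma ip_eq_sum (x y : A) : T.ip x y = ∑ d ∈ T.B, T.ip x d * T.ip y d := by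
  conv_lhs => rw [← T.sum_ip_smul x]
  simp only [map_sum, map_smul, LinearMap.sum_apply, LinearMap.smul_apply, smul_eq_mul,
    T.ip_symm _ y]

lemma zero_lt_deg {d : A} (hd : d ∈ T.B) : 0 < T.deg d := by
  obtain ⟨r, hr, h⟩ := T.deg_pos d hd
  rw [h]
  exact_mod_cast hr

lemma mul_sum_deg_smul (c : A) :
    c * ∑ d ∈ T.B, T.deg d • d = T.deg (T.bar c) • ∑ d ∈ T.B, T.deg d • d := by
  apply T.ext_ip
  intro e he
  rw [map_smul, LinearMap.smul_apply, T.ip_sum_smul _ he, smul_eq_mul, ← map_mul,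
    T.deg_eq_sum, Finset.mul_sum]
  simp only [mul_smul_comm, map_sum, map_smul, LinearMap.sum_apply, LinearMap.smul_apply,
    smul_eq_mul, T.ip_mul_left c, T.ip_symm _ (T.bar c * e), mul_comm (T.deg _)]

lemma deg_bar (x : A) : T.deg (T.bar x) = T.deg x := by
  have h := congrArg T.deg (T.mul_sum_deg_smul x)
  rw [map_mul, map_smul, smul_eq_mul] at h
  have hpos : 0 < T.deg (∑ d ∈ T.B, T.deg d • d) := by
    simp only [map_sum, map_smul, smul_eq_mul]
    exact Finset.sum_pos (fun d hd => mul_pos (T.zero_lt_deg hd) (T.zero_lt_deg hd))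
      ⟨1, T.one_mem⟩
  exact (mul_right_cancel₀ hpos.ne' h).symm

lemma ip_self_sub (x : A) {e : A} (he : e ∈ T.B) :
    T.ip (x - e) (x - e) = T.ip x x - 2 * T.ip x e + 1 := by
  simp only [map_sub, LinearMap.sub_apply, T.ip_symm e x, T.ip_self e he]
  ring

def IsNatComb (x : A) : Prop := ∀ d ∈ T.B, ∃ n : ℕ, T.ip x d = n

variable {T}

lemma isNatComb_mul (hInt : T.Integral) {b c : A} (hb : b ∈ T.B) (hc : c ∈ T.B) :
    T.IsNatComb (b * c) :=
  fun d hd => hInt.1 b hb c hc d hd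

lemma three_le_deg (hInt : T.Integral) (hSmall : T.NoSmall) {d : A} (hd : d ∈ T.B)
    (hd1 : d ≠ 1) : 3 ≤ T.deg d := by
  obtain ⟨m, hm, hdm⟩ := hInt.2 d hd
  have h1 : m ≠ 1 := by rintro rfl; exact hd1 (hSmall.1 d hd (by simpa using hdm))
  have h2 : m ≠ 2 := by rintro rfl; exact hSmall.2 d hd (by simpa using hdm)
  rw [hdm]
  exact_mod_cast (by omega : 3 ≤ m)

namespace IsNatComb

variable {x : A}

lemma ip_nonneg (hx : T.IsNatComb x) {d : A} (hd : d ∈ T.B) : 0 ≤ T.ip x d := by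
  obtain ⟨n, hn⟩ := hx d hd
  rw [hn]
  exact Nat.cast_nonneg n

lemma sub (hx : T.IsNatComb x) {e : A} (he : e ∈ T.B) (hxe : T.ip x e ≠ 0) :
    T.IsNatComb (x - e) := by
  intro d hd
  obtain ⟨n, hn⟩ := hx d hd
  rw [map_sub, LinearMap.sub_apply, hn]
  by_cases hed : e = d
  · subst hed
    have hn0 : n ≠ 0 := by rintro rfl; exact hxe (by simpa using hn)
    exact ⟨n - 1, by rw [T.ip_self e he, Nat.cast_sub (by omega), Nat.cast_one]⟩
  · exact ⟨n, by rw [T.ip_ne e he d hd hed, sub_zero]⟩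

lemma ip_mul_le_sum (hx : T.IsNatComb x) {w : A → ℂ} (hw : ∀ e ∈ T.B, 0 ≤ w e) {d : A}
    (hd : d ∈ T.B) :
    T.ip x d * w d ≤ ∑ e ∈ T.B, T.ip x e * w e :=
  Finset.single_le_sum (fun e he => mul_nonneg (hx.ip_nonneg he) (hw e he)) hd

lemma ip_eq_zero_of_deg_lt (hx : T.IsNatComb x) {d : A} (hd : d ∈ T.B)
    (h : T.deg x < T.deg d) : T.ip x d = 0 := by
  obtain ⟨n, hn⟩ := hx d hd
  rw [hn, Nat.cast_eq_zero]
  by_contra hn0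
  have hle : T.ip x d * T.deg d ≤ T.deg x := by
    rw [T.deg_eq_sum x]
    exact hx.ip_mul_le_sum (fun e he => (T.zero_lt_deg he).le) hd
  have hge : T.deg d ≤ T.ip x d * T.deg d := by
    rw [hn]
    exact le_mul_of_one_le_left (T.zero_lt_deg hd).le
      (by exact_mod_cast Nat.one_le_iff_ne_zero.2 hn0)
  exact lt_irrefl _ (h.trans_le (hge.trans hle))

lemma eq_zero_of_deg_eq_zero (hx : T.IsNatComb x) (h : T.deg x = 0) : x = 0 :=
  T.ext_ip fun d hd => by
    rw [hx.ip_eq_zero_of_deg_lt hd (h ▸ T.zero_lt_deg hd), map_zero, LinearMap.zero_apply]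

lemma eq_zero_of_deg_lt_three (hx : T.IsNatComb x) (hInt : T.Integral) (hSmall : T.NoSmall)
    (h1 : T.ip x 1 = 0) (h : T.deg x < 3) : x = 0 :=
  T.ext_ip fun d hd => by
    rw [map_zero, LinearMap.zero_apply]
    by_cases hd1 : d = 1
    · rwa [hd1]
    · exact hx.ip_eq_zero_of_deg_lt hd (h.trans_le (three_le_deg hInt hSmall hd hd1))

lemma mem_of_deg_eq_three (hx : T.IsNatComb x) (hInt : T.Integral) (hSmall : T.NoSmall)
    (h1 : T.ip x 1 = 0) (h : T.deg x = 3) : x ∈ T.B := by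
  have hx0 : x ≠ 0 := by rintro rfl; norm_num at h
  obtain ⟨d, hd, hxd⟩ := T.exists_ip_ne_zero hx0
  have hd1 : d ≠ 1 := by rintro rfl; exact hxd h1
  have hxd0 : x - d = 0 := by
    refine (hx.sub hd hxd).eq_zero_of_deg_lt_three hInt hSmall ?_ ?_
    · rw [map_sub, LinearMap.sub_apply, h1, T.ip_ne d hd 1 T.one_mem hd1, sub_zero]
    · rw [map_sub, h]
      exact sub_lt_self 3 (T.zero_lt_deg hd)
  rwa [sub_eq_zero.1 hxd0]

lemma eq_zero_of_ip_self_eq_zero (hx : T.IsNatComb x) (h : T.ip x x = 0) : x = 0 :=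
  T.ext_ip fun d hd => by
    obtain ⟨n, hn⟩ := hx d hd
    have hle : T.ip x d * T.ip x d ≤ 0 := by
      rw [← h, T.ip_eq_sum x x]
      exact hx.ip_mul_le_sum (fun e he => hx.ip_nonneg he) hd
    rw [hn] at hle ⊢
    have hn0 : n * n = 0 := Nat.le_zero.1 (by exact_mod_cast hle)
    rw [mul_self_eq_zero.1 hn0, map_zero, LinearMap.zero_apply, Nat.cast_zero]

lemma mem_of_ip_self_eq_one (hx : T.IsNatComb x) (h : T.ip x x = 1) : x ∈ T.B := by
  have hx0 : x ≠ 0 := by rintro rfl; simp at h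
  obtain ⟨d, hd, hxd⟩ := T.exists_ip_ne_zero hx0
  obtain ⟨n, hn⟩ := hx d hd
  have hn1 : n = 1 := by
    have hle : T.ip x d * T.ip x d ≤ 1 := by
      rw [← h, T.ip_eq_sum x x]
      exact hx.ip_mul_le_sum (fun e he => hx.ip_nonneg he) hd
    rw [hn] at hle hxd
    have : n * n ≤ 1 := by exact_mod_cast hle
    have : 0 < n := Nat.pos_of_ne_zero (by rintro rfl; simp at hxd)
    nlinarith
  have hxd0 : x - d = 0 := by
    refine (hx.sub hd hxd).eq_zero_of_ip_self_eq_zero ?_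
    rw [T.ip_self_sub x hd, h, hn, hn1]
    norm_num
  rwa [sub_eq_zero.1 hxd0]

lemma sub_mem_of_ip_self_eq_two (hx : T.IsNatComb x) {e : A} (he : e ∈ T.B)
    (h : T.ip x x = 2) (hxe : T.ip x e = 1) : x - e ∈ T.B := by
  refine (hx.sub he (by rw [hxe]; exact one_ne_zero)).mem_of_ip_self_eq_one ?_
  rw [T.ip_self_sub x he, h, hxe]
  norm_num

end IsNatComb

/-- Hypothesis 5.1 of the paper, with `b₁₀` real and `(c̄₉b₃, c₉) = 1`. -/
structure Setting (T : TAData A) (b3 c8 b6 b10 b15 c9 : A) : Prop where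
  integral : T.Integral
  noSmall : T.NoSmall
  b3_mem : b3 ∈ T.B
  deg_b3 : T.deg b3 = 3
  c8_mem : c8 ∈ T.B
  deg_c8 : T.deg c8 = 8
  mul_bar_b3 : b3 * T.bar b3 = 1 + c8
  b6_mem : b6 ∈ T.B
  deg_b6 : T.deg b6 = 6
  sq_b3 : b3 * b3 = T.bar b3 + b6
  bar_b10 : T.bar b10 = b10
  mul_b6 : b3 * b6 = c8 + b10
  b15_mem : b15 ∈ T.B
  deg_b15 : T.deg b15 = 15
  bar_b3_mul_b6 : T.bar b3 * b6 = b3 + b15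
  c9_mem : c9 ∈ T.B
  deg_c9 : T.deg c9 = 9
  mul_b10 : b3 * b10 = b15 + T.bar b6 + T.bar c9
  ip_bar_c9_mul_b3 : T.ip (T.bar c9 * b3) c9 = 1

namespace Setting

variable {b3 c8 b6 b10 b15 c9 : A}

lemma bar_sq_b3 (H : Setting T b3 c8 b6 b10 b15 c9) :
    T.bar b3 * T.bar b3 = b3 + T.bar b6 := by
  simpa only [map_mul, map_add, T.bar_bar] using congrArg T.bar H.sq_b3

lemma c8_mul_b3 (H : Setting T b3 c8 b6 b10 b15 c9) : c8 * b3 = b3 + T.bar b6 + b15 := by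
  linear_combination H.bar_sq_b3 + H.bar_b3_mul_b6 + T.bar b3 * H.sq_b3 - b3 * H.mul_bar_b3

lemma b3_mul_b15 (H : Setting T b3 c8 b6 b10 b15 c9) :
    b3 * b15 = b6 + T.bar b15 + T.bar b15 + c9 := by
  have h15 : b3 * T.bar b6 = T.bar b3 + T.bar b15 := by
    simpa only [map_mul, map_add, T.bar_bar] using congrArg T.bar H.bar_b3_mul_b6
  have h10 : T.bar b3 * b10 = T.bar b15 + b6 + c9 := by
    simpa only [map_mul, map_add, T.bar_bar, H.bar_b10] using congrArg T.bar H.mul_b10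
  linear_combination h15 + b3 * H.bar_sq_b3 - T.bar b3 * H.mul_bar_b3 + h10 +
    T.bar b3 * H.mul_b6 - b3 * H.bar_b3_mul_b6

def c3 (_ : Setting T b3 c8 b6 b10 b15 c9) : A := b3 * T.bar c9 - T.bar b15 - c9

lemma b3_mul_bar_c9 (H : Setting T b3 c8 b6 b10 b15 c9) :
    b3 * T.bar c9 = T.bar b15 + c9 + H.c3 := by
  rw [c3]; ring

lemma deg_c3 (H : Setting T b3 c8 b6 b10 b15 c9) : T.deg H.c3 = 3 := by
  simp only [c3, map_sub, map_mul, T.deg_bar, H.deg_b3, H.deg_c9, H.deg_b15]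
  norm_num

lemma c3_mem (H : Setting T b3 c8 b6 b10 b15 c9) : H.c3 ∈ T.B := by
  have h15 : T.ip (b3 * T.bar c9) (T.bar b15) = 1 := by
    rw [T.ip_mul_left, ← map_mul, H.b3_mul_b15]
    simp [T.bar_bar, T.ip_eq_zero_of_deg_ne, T.ip_self, T.bar_mem, T.deg_bar, H.deg_b6,
      H.deg_c9, H.deg_b15, H.b6_mem, H.c9_mem, H.b15_mem]
  have h9 : T.ip (b3 * T.bar c9) c9 = 1 := by rw [mul_comm]; exact H.ip_bar_c9_mul_b3
  have hN : T.IsNatComb H.c3 := by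
    refine ((isNatComb_mul H.integral H.b3_mem (T.bar_mem _ H.c9_mem)).sub
      (T.bar_mem _ H.b15_mem) (by rw [h15]; exact one_ne_zero)).sub H.c9_mem ?_
    simp [h9, T.ip_eq_zero_of_deg_ne, T.bar_mem, T.deg_bar, H.deg_c9, H.deg_b15, H.c9_mem,
      H.b15_mem]
  refine hN.mem_of_deg_eq_three H.integral H.noSmall ?_ H.deg_c3
  simp [c3, T.ip_mul_left, T.ip_eq_zero_of_deg_ne, T.bar_mem, T.deg_bar, T.one_mem, H.deg_b3,
    H.deg_c9, H.deg_b15, H.b3_mem, H.c9_mem, H.b15_mem]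

lemma bar_b3_mul_c9 (H : Setting T b3 c8 b6 b10 b15 c9) :
    T.bar b3 * c9 = b15 + T.bar c9 + T.bar H.c3 := by
  simpa only [map_mul, map_add, T.bar_bar] using congrArg T.bar H.b3_mul_bar_c9

lemma b3_mul_bar_c3 (H : Setting T b3 c8 b6 b10 b15 c9) : b3 * T.bar H.c3 = c9 := by
  have h9 : T.ip (b3 * T.bar H.c3) c9 = 1 := by
    rw [T.ip_mul_left, H.bar_b3_mul_c9]
    simp [T.ip_eq_zero_of_deg_ne, T.ip_self, T.bar_mem, T.deg_bar, H.deg_c3, H.deg_c9,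
      H.deg_b15, H.c3_mem, H.c9_mem, H.b15_mem]
  have hN := (isNatComb_mul H.integral H.b3_mem (T.bar_mem _ H.c3_mem)).sub H.c9_mem
    (by rw [h9]; exact one_ne_zero)
  refine sub_eq_zero.1 (hN.eq_zero_of_deg_eq_zero ?_)
  simp only [map_sub, map_mul, T.deg_bar, H.deg_b3, H.deg_c3, H.deg_c9]
  norm_num

lemma c8_mul_bar_c3 (H : Setting T b3 c8 b6 b10 b15 c9) :
    c8 * T.bar H.c3 = b15 + T.bar c9 := by
  linear_combination H.bar_b3_mul_c9 + T.bar b3 * H.b3_mul_bar_c3 - T.bar H.c3 * H.mul_bar_b3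

lemma ip_c3_mul_bar_c3_c8 (H : Setting T b3 c8 b6 b10 b15 c9) :
    T.ip (H.c3 * T.bar H.c3) c8 = 0 := by
  rw [T.ip_mul_left, mul_comm, H.c8_mul_bar_c3]
  simp [T.ip_eq_zero_of_deg_ne, T.bar_mem, T.deg_bar, H.deg_c3, H.deg_c9, H.deg_b15,
    H.c3_mem, H.c9_mem, H.b15_mem]

lemma b3_mul_c3_mem (H : Setting T b3 c8 b6 b10 b15 c9) : b3 * H.c3 ∈ T.B := by
  refine (isNatComb_mul H.integral H.b3_mem H.c3_mem).mem_of_ip_self_eq_one ?_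
  have h : b3 * H.c3 * T.bar b3 = H.c3 + H.c3 * c8 := by
    linear_combination H.c3 * H.mul_bar_b3
  rw [T.ip_assoc, h, map_add, LinearMap.add_apply, T.ip_self _ H.c3_mem, T.ip_mul_left,
    T.ip_symm, mul_comm, H.ip_c3_mul_bar_c3_c8, add_zero]

lemma ip_sq_c3_bar_b6 (H : Setting T b3 c8 b6 b10 b15 c9) :
    T.ip (H.c3 * H.c3) (T.bar b6) = 1 := by
  have key : T.bar H.c3 * T.bar b6 =
      b6 + T.bar b15 + T.bar b15 + T.bar b15 + c9 + H.c3 - b15 * T.bar H.c3 := by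
    linear_combination H.b3_mul_b15 + H.b3_mul_bar_c9 + b3 * H.c8_mul_bar_c3 -
      H.b3_mul_bar_c3 - T.bar H.c3 * H.c8_mul_b3
  have h15 : T.ip H.c3 (b15 * T.bar H.c3) = 0 := by
    rw [mul_comm, ← T.ip_mul_left]
    refine (isNatComb_mul H.integral H.c3_mem H.c3_mem).ip_eq_zero_of_deg_lt H.b15_mem ?_
    rw [map_mul, H.deg_c3, H.deg_b15]
    norm_num
  rw [T.ip_mul_left, key]
  simp [h15, T.ip_eq_zero_of_deg_ne, T.ip_self, T.bar_mem, T.deg_bar, H.deg_c3, H.deg_c9,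
    H.deg_b6, H.deg_b15, H.c3_mem, H.c9_mem, H.b6_mem, H.b15_mem]

lemma bar_b3_mul_c3 (H : Setting T b3 c8 b6 b10 b15 c9) :
    T.bar (b3 * H.c3) = b3 * H.c3 := by
  have h : T.bar b3 * (T.bar b3 * T.bar H.c3) = c9 + T.bar H.c3 * T.bar b6 := by
    linear_combination T.bar H.c3 * H.bar_sq_b3 + H.b3_mul_bar_c3
  have h1 : T.ip (b3 * H.c3) (T.bar (b3 * H.c3)) = 1 := by
    rw [T.ip_mul_left, map_mul T.bar, h, map_add, ← T.ip_mul_left, H.ip_sq_c3_bar_b6,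
      T.ip_eq_zero_of_deg_ne H.c3_mem H.c9_mem (by rw [H.deg_c3, H.deg_c9]; norm_num), zero_add]
  by_contra hne
  rw [T.ip_ne _ H.b3_mul_c3_mem _ (T.bar_mem _ H.b3_mul_c3_mem) (Ne.symm hne)] at h1
  exact zero_ne_one h1

lemma bar_c3_ne (H : Setting T b3 c8 b6 b10 b15 c9) : T.bar H.c3 ≠ H.c3 := by
  intro hreal
  have h1 : T.ip (H.c3 * H.c3) 1 = 1 := by
    rw [T.ip_mul_left, mul_one, hreal, T.ip_self _ H.c3_mem]
  have h6 : T.ip (H.c3 * H.c3 - 1) (T.bar b6) = 1 := by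
    simp [H.ip_sq_c3_bar_b6, T.ip_eq_zero_of_deg_ne, T.one_mem, T.bar_mem, T.deg_bar,
      H.deg_b6, H.b6_mem]
  have hN := ((isNatComb_mul H.integral H.c3_mem H.c3_mem).sub T.one_mem
    (by rw [h1]; exact one_ne_zero)).sub (T.bar_mem _ H.b6_mem) (by rw [h6]; exact one_ne_zero)
  have hdeg : T.deg (H.c3 * H.c3 - 1 - T.bar b6) = 2 := by
    simp only [map_sub, map_mul, map_one, T.deg_bar, H.deg_c3, H.deg_b6]
    norm_num
  have h0 := hN.eq_zero_of_deg_lt_three H.integral H.noSmall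
    (by simp [h1, T.ip_self, T.one_mem, T.ip_eq_zero_of_deg_ne, T.bar_mem, T.deg_bar,
      H.deg_b6, H.b6_mem])
    (by rw [hdeg]; norm_num)
  rw [h0, map_zero] at hdeg
  norm_num at hdeg

lemma ip_sq_c3_self (H : Setting T b3 c8 b6 b10 b15 c9) :
    T.ip (H.c3 * H.c3) (H.c3 * H.c3) = 2 := by
  have hN := (isNatComb_mul H.integral H.c3_mem H.c3_mem).sub (T.bar_mem _ H.b6_mem)
    (by rw [H.ip_sq_c3_bar_b6]; exact one_ne_zero)
  have hy : H.c3 * H.c3 - T.bar b6 ∈ T.B := by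
    refine hN.mem_of_deg_eq_three H.integral H.noSmall ?_ ?_
    · rw [map_sub, LinearMap.sub_apply, T.ip_mul_left, mul_one,
        T.ip_ne _ H.c3_mem _ (T.bar_mem _ H.c3_mem) (Ne.symm H.bar_c3_ne),
        T.ip_eq_zero_of_deg_ne (T.bar_mem _ H.b6_mem) T.one_mem
          (by rw [T.deg_bar, H.deg_b6, map_one]; norm_num), sub_zero]
    · simp only [map_sub, map_mul, T.deg_bar, H.deg_c3, H.deg_b6]
      norm_num
  have hdeg : T.deg (H.c3 * H.c3 - T.bar b6) = 3 := by
    simp only [map_sub, map_mul, T.deg_bar, H.deg_c3, H.deg_b6]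
    norm_num
  rw [show H.c3 * H.c3 = T.bar b6 + (H.c3 * H.c3 - T.bar b6) by ring]
  simp only [map_add, LinearMap.add_apply, T.ip_self _ hy, T.ip_self _ (T.bar_mem _ H.b6_mem),
    T.ip_eq_zero_of_deg_ne hy (T.bar_mem _ H.b6_mem)
      (by rw [hdeg, T.deg_bar, H.deg_b6]; norm_num),
    T.ip_eq_zero_of_deg_ne (T.bar_mem _ H.b6_mem) hy
      (by rw [hdeg, T.deg_bar, H.deg_b6]; norm_num)]
  norm_num

lemma c3_mul_bar_c3_sub_one_mem (H : Setting T b3 c8 b6 b10 b15 c9) :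
    H.c3 * T.bar H.c3 - 1 ∈ T.B := by
  have h2 := H.ip_sq_c3_self
  rw [T.ip_assoc, show H.c3 * H.c3 * T.bar H.c3 = H.c3 * (H.c3 * T.bar H.c3) by ring,
    T.ip_mul_left, mul_comm (T.bar H.c3)] at h2
  refine (isNatComb_mul H.integral H.c3_mem (T.bar_mem _ H.c3_mem)).sub_mem_of_ip_self_eq_two
    T.one_mem h2 ?_
  rw [T.ip_mul_left, mul_one, T.ip_self _ (T.bar_mem _ H.c3_mem)]

lemma c3_mul_bar_c3_sub_one_ne_c8 (H : Setting T b3 c8 b6 b10 b15 c9) :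
    H.c3 * T.bar H.c3 - 1 ≠ c8 := by
  intro h
  have h0 := H.ip_c3_mul_bar_c3_c8
  rw [sub_eq_iff_eq_add.1 h, map_add, LinearMap.add_apply, T.ip_self _ H.c8_mem,
    T.ip_eq_zero_of_deg_ne T.one_mem H.c8_mem (by rw [map_one, H.deg_c8]; norm_num)] at h0
  norm_num at h0

end Setting

end TAData

theorem stmt_11_general {A : Type} [CommRing A] [Algebra ℂ A] (T : TAData A)
    (hInt : T.Integral) (hSmall : T.NoSmall)
    (b3 c8 b6 b10 b15 c9 : A)
    (hb3 : b3 ∈ T.B) (hd3 : T.deg b3 = 3)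
    (hc8 : c8 ∈ T.B) (hd8 : T.deg c8 = 8)
    (hmul : b3 * T.bar b3 = 1 + c8)
    (hb6 : b6 ∈ T.B) (hd6 : T.deg b6 = 6)
    (hsq : b3 * b3 = T.bar b3 + b6)
    (hreal10 : T.bar b10 = b10)
    (hprod : b3 * b6 = c8 + b10)
    (hb15 : b15 ∈ T.B) (hd15 : T.deg b15 = 15)
    (hprod15 : T.bar b3 * b6 = b3 + b15)
    (hc9 : c9 ∈ T.B) (hd9 : T.deg c9 = 9)
    (hprod10 : b3 * b10 = b15 + T.bar b6 + T.bar c9)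
    (hip : T.ip (T.bar c9 * b3) c9 = 1) :
    ∃ c3 ∈ T.B, T.deg c3 = 3 ∧
      b3 * T.bar c9 = T.bar b15 + c9 + c3 ∧
      (∃ b8 ∈ T.B, T.deg b8 = 8 ∧ T.bar b8 = b8 ∧ b8 ≠ c8 ∧
        c3 * T.bar c3 = 1 + b8) ∧
      b3 * T.bar c3 = c9 ∧
      ∃ b9 ∈ T.B, T.deg b9 = 9 ∧ T.bar b9 = b9 ∧ b3 * c3 = b9 := by
  have H : T.Setting b3 c8 b6 b10 b15 c9 := ⟨hInt, hSmall, hb3, hd3, hc8, hd8, hmul, hb6, hd6,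
    hsq, hreal10, hprod, hb15, hd15, hprod15, hc9, hd9, hprod10, hip⟩
  refine ⟨H.c3, H.c3_mem, H.deg_c3, H.b3_mul_bar_c9,
    ⟨_, H.c3_mul_bar_c3_sub_one_mem, ?_, ?_, H.c3_mul_bar_c3_sub_one_ne_c8, by ring⟩,
    H.b3_mul_bar_c3, _, H.b3_mul_c3_mem, ?_, H.bar_b3_mul_c3, rfl⟩
  · simp only [map_sub, map_mul, map_one, T.deg_bar, H.deg_c3]
    norm_num
  · simp only [map_sub, map_mul, map_one, T.bar_bar, mul_comm]
  · rw [map_mul, hd3, H.deg_c3]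
    norm_num

/-- Lemma 5.2, parts 1–6 and 9: under Hypothesis 5.1 with `b₁₀`
real and `(c̄₉b₃, c₉) = 1`, one gets `b₃c̄₉ = b̄₁₅ + c₉ + c₃` with `c₃ ∈ B` of
degree 3, `c₃c̄₃ = 1 + b₈` for a real `b₈ ≠ c₈` of degree 8, `b₃c̄₃ = c₉` and
`b₃c₃ = b₉` with `b₉` real of degree 9. -/
theorem stmt_11 {A : Type} [CommRing A] [Algebra ℂ A] (T : TAData A)
    (hInt : T.Integral) (hSmall : T.NoSmall)
    (b3 c8 b6 b10 b15 c9 : A)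
    (hb3 : b3 ∈ T.B) (hd3 : T.deg b3 = 3) (hnr : T.bar b3 ≠ b3)
    (hgen : T.GeneratedBy b3)
    (hc8 : c8 ∈ T.B) (hd8 : T.deg c8 = 8)
    (hmul : b3 * T.bar b3 = 1 + c8)
    (hb6 : b6 ∈ T.B) (hd6 : T.deg b6 = 6) (hnr6 : T.bar b6 ≠ b6)
    (hsq : b3 * b3 = T.bar b3 + b6)
    (hb10 : b10 ∈ T.B) (hd10 : T.deg b10 = 10) (hreal10 : T.bar b10 = b10)
    (hprod : b3 * b6 = c8 + b10)
    (hb15 : b15 ∈ T.B) (hd15 : T.deg b15 = 15)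
    (hprod15 : T.bar b3 * b6 = b3 + b15)
    (hc9 : c9 ∈ T.B) (hd9 : T.deg c9 = 9)
    (hprod10 : b3 * b10 = b15 + T.bar b6 + T.bar c9)
    (hip : T.ip (T.bar c9 * b3) c9 = 1) :
    ∃ c3 ∈ T.B, T.deg c3 = 3 ∧
      b3 * T.bar c9 = T.bar b15 + c9 + c3 ∧
      (∃ b8 ∈ T.B, T.deg b8 = 8 ∧ T.bar b8 = b8 ∧ b8 ≠ c8 ∧
        c3 * T.bar c3 = 1 + b8) ∧
      b3 * T.bar c3 = c9 ∧
      ∃ b9 ∈ T.B, T.deg b9 = 9 ∧ T.bar b9 = b9 ∧ b3 * c3 = b9 :=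
  stmt_11_general T hInt hSmall b3 c8 b6 b10 b15 c9 hb3 hd3 hc8 hd8 hmul hb6 hd6 hsq hreal10 hprod
    hb15 hd15 hprod15 hc9 hd9 hprod10 hip
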